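/- Let H = A #_ψ^φ B be a cross product bialgebra over a commutative ring k. The map φ is left and right normal (i.e. φ(1_A ⊗ b) = b ⊗ 1_A and φ(a ⊗ 1_B) = 1_B ⊗ a for all a ∈ A, b ∈ B) if and only if φ is the flip map, φ(a⊗b) = b⊗a; in that case the coalgebra A #^φ B is the tensor product coalgebra, with Δ(a⊗b) = Σ (a₁⊗b₁) ⊗ (a₂⊗b₂). -/
import Mathlib


open TensorProduct

variable {k A B : Type*} [CommRing k] [Ring A] [Ring B] [Algebra k A] [Algebra k B]
  [Coalgebra k A] [Coalgebra k B]

/-- The cross product multiplication on `A ⊗ B` induced by `ψ : B ⊗ A → A ⊗ B`. -/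
noncomputable def crossMul (ψ : B ⊗[k] A →ₗ[k] A ⊗[k] B) :
    (A ⊗[k] B) ⊗[k] (A ⊗[k] B) →ₗ[k] A ⊗[k] B :=
  TensorProduct.map (LinearMap.mul' k A) (LinearMap.mul' k B) ∘ₗ
    (TensorProduct.assoc k (A ⊗[k] A) B B).toLinearMap ∘ₗ
    TensorProduct.map
      ((TensorProduct.assoc k A A B).symm.toLinearMap ∘ₗ
        TensorProduct.map (LinearMap.id : A →ₗ[k] A) ψ ∘ₗ
        (TensorProduct.assoc k A B A).toLinearMap)
      (LinearMap.id : B →ₗ[k] B) ∘ₗ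
    (TensorProduct.assoc k (A ⊗[k] B) A B).symm.toLinearMap

/-- (a): `ψ ∘ (m_B ⊗ id_A) = (id_A ⊗ m_B) ∘ (ψ ⊗ id_B) ∘ (id_B ⊗ ψ)`. -/
def psiCondA (ψ : B ⊗[k] A →ₗ[k] A ⊗[k] B) : Prop :=
  ψ ∘ₗ TensorProduct.map (LinearMap.mul' k B) (LinearMap.id : A →ₗ[k] A) =
    TensorProduct.map (LinearMap.id : A →ₗ[k] A) (LinearMap.mul' k B) ∘ₗ
      (TensorProduct.assoc k A B B).toLinearMap ∘ₗ
      TensorProduct.map ψ (LinearMap.id : B →ₗ[k] B) ∘ₗ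
      (TensorProduct.assoc k B A B).symm.toLinearMap ∘ₗ
      TensorProduct.map (LinearMap.id : B →ₗ[k] B) ψ ∘ₗ
      (TensorProduct.assoc k B B A).toLinearMap

/-- (b): `ψ ∘ (id_B ⊗ m_A) = (m_A ⊗ id_B) ∘ (id_A ⊗ ψ) ∘ (ψ ⊗ id_A)`. -/
def psiCondB (ψ : B ⊗[k] A →ₗ[k] A ⊗[k] B) : Prop :=
  ψ ∘ₗ TensorProduct.map (LinearMap.id : B →ₗ[k] B) (LinearMap.mul' k A) =
    TensorProduct.map (LinearMap.mul' k A) (LinearMap.id : B →ₗ[k] B) ∘ₗ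
      (TensorProduct.assoc k A A B).symm.toLinearMap ∘ₗ
      TensorProduct.map (LinearMap.id : A →ₗ[k] A) ψ ∘ₗ
      (TensorProduct.assoc k A B A).toLinearMap ∘ₗ
      TensorProduct.map ψ (LinearMap.id : A →ₗ[k] A) ∘ₗ
      (TensorProduct.assoc k B A A).symm.toLinearMap

/-- (c): `ψ(b ⊗ 1_A) = 1_A ⊗ b`. -/
def psiCondC (ψ : B ⊗[k] A →ₗ[k] A ⊗[k] B) : Prop :=
  ∀ b : B, ψ (b ⊗ₜ[k] (1 : A)) = (1 : A) ⊗ₜ[k] b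

/-- (d): `ψ(1_B ⊗ a) = a ⊗ 1_B`. -/
def psiCondD (ψ : B ⊗[k] A →ₗ[k] A ⊗[k] B) : Prop :=
  ∀ a : A, ψ ((1 : B) ⊗ₜ[k] a) = a ⊗ₜ[k] (1 : B)

/-- The cross coproduct comultiplication on `A ⊗ B` induced by `φ : A ⊗ B → B ⊗ A`. -/
noncomputable def crossComul (φ : A ⊗[k] B →ₗ[k] B ⊗[k] A) :
    A ⊗[k] B →ₗ[k] (A ⊗[k] B) ⊗[k] (A ⊗[k] B) :=
  (TensorProduct.assoc k (A ⊗[k] B) A B).toLinearMap ∘ₗ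
    TensorProduct.map
      ((TensorProduct.assoc k A B A).symm.toLinearMap ∘ₗ
        TensorProduct.map (LinearMap.id : A →ₗ[k] A) φ ∘ₗ
        (TensorProduct.assoc k A A B).toLinearMap)
      (LinearMap.id : B →ₗ[k] B) ∘ₗ
    (TensorProduct.assoc k (A ⊗[k] A) B B).symm.toLinearMap ∘ₗ
    TensorProduct.map (Coalgebra.comul (R := k) (A := A)) (Coalgebra.comul (R := k) (A := B))

/-- The counit `ε_A ⊗ ε_B` on `A ⊗ B`. -/
noncomputable def crossCounit : A ⊗[k] B →ₗ[k] k :=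
  (TensorProduct.lid k k).toLinearMap ∘ₗ
    TensorProduct.map (Coalgebra.counit (R := k) (A := A)) (Coalgebra.counit (R := k) (A := B))

/-- (a): `(Δ_B ⊗ id_A) ∘ φ = (id_B ⊗ φ) ∘ (φ ⊗ id_B) ∘ (id_A ⊗ Δ_B)`. -/
def phiCondA (φ : A ⊗[k] B →ₗ[k] B ⊗[k] A) : Prop :=
  TensorProduct.map (Coalgebra.comul (R := k) (A := B)) (LinearMap.id : A →ₗ[k] A) ∘ₗ φ =
    (TensorProduct.assoc k B B A).symm.toLinearMap ∘ₗ
      TensorProduct.map (LinearMap.id : B →ₗ[k] B) φ ∘ₗ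
      (TensorProduct.assoc k B A B).toLinearMap ∘ₗ
      TensorProduct.map φ (LinearMap.id : B →ₗ[k] B) ∘ₗ
      (TensorProduct.assoc k A B B).symm.toLinearMap ∘ₗ
      TensorProduct.map (LinearMap.id : A →ₗ[k] A) (Coalgebra.comul (R := k) (A := B))

/-- (b): `(id_B ⊗ Δ_A) ∘ φ = (φ ⊗ id_A) ∘ (id_A ⊗ φ) ∘ (Δ_A ⊗ id_B)`. -/
def phiCondB (φ : A ⊗[k] B →ₗ[k] B ⊗[k] A) : Prop :=
  TensorProduct.map (LinearMap.id : B →ₗ[k] B) (Coalgebra.comul (R := k) (A := A)) ∘ₗ φ =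
    (TensorProduct.assoc k B A A).toLinearMap ∘ₗ
      TensorProduct.map φ (LinearMap.id : A →ₗ[k] A) ∘ₗ
      (TensorProduct.assoc k A B A).symm.toLinearMap ∘ₗ
      TensorProduct.map (LinearMap.id : A →ₗ[k] A) φ ∘ₗ
      (TensorProduct.assoc k A A B).toLinearMap ∘ₗ
      TensorProduct.map (Coalgebra.comul (R := k) (A := A)) (LinearMap.id : B →ₗ[k] B)

/-- (c): `(id_B ⊗ ε_A) ∘ φ = ε_A ⊗ id_B`. -/
def phiCondC (φ : A ⊗[k] B →ₗ[k] B ⊗[k] A) : Prop :=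
  (TensorProduct.rid k B).toLinearMap ∘ₗ
      TensorProduct.map (LinearMap.id : B →ₗ[k] B) (Coalgebra.counit (R := k) (A := A)) ∘ₗ φ =
    (TensorProduct.lid k B).toLinearMap ∘ₗ
      TensorProduct.map (Coalgebra.counit (R := k) (A := A)) (LinearMap.id : B →ₗ[k] B)

/-- (d): `(ε_B ⊗ id_A) ∘ φ = id_A ⊗ ε_B`. -/
def phiCondD (φ : A ⊗[k] B →ₗ[k] B ⊗[k] A) : Prop :=
  (TensorProduct.lid k A).toLinearMap ∘ₗ
      TensorProduct.map (Coalgebra.counit (R := k) (A := B)) (LinearMap.id : A →ₗ[k] A) ∘ₗ φ =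
    (TensorProduct.rid k A).toLinearMap ∘ₗ
      TensorProduct.map (LinearMap.id : A →ₗ[k] A) (Coalgebra.counit (R := k) (A := B))

/-- `A ⊗ B` with the cross product multiplication induced by `ψ`, unit `1 ⊗ 1`, the cross
coproduct comultiplication induced by `φ` and counit `ε_A ⊗ ε_B` is a bialgebra. -/
def IsCrossBialgebra (ψ : B ⊗[k] A →ₗ[k] A ⊗[k] B) (φ : A ⊗[k] B →ₗ[k] B ⊗[k] A) : Prop :=
  (∀ x y z : A ⊗[k] B,
      crossMul ψ (crossMul ψ (x ⊗ₜ[k] y) ⊗ₜ[k] z) =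
        crossMul ψ (x ⊗ₜ[k] crossMul ψ (y ⊗ₜ[k] z))) ∧
  (∀ x : A ⊗[k] B, crossMul ψ (((1 : A) ⊗ₜ[k] (1 : B)) ⊗ₜ[k] x) = x) ∧
  (∀ x : A ⊗[k] B, crossMul ψ (x ⊗ₜ[k] ((1 : A) ⊗ₜ[k] (1 : B))) = x) ∧
  ((TensorProduct.assoc k (A ⊗[k] B) (A ⊗[k] B) (A ⊗[k] B)).toLinearMap ∘ₗ
      TensorProduct.map (crossComul φ) (LinearMap.id : A ⊗[k] B →ₗ[k] A ⊗[k] B) ∘ₗ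
        crossComul φ =
      TensorProduct.map (LinearMap.id : A ⊗[k] B →ₗ[k] A ⊗[k] B) (crossComul φ) ∘ₗ
        crossComul φ) ∧
  ((TensorProduct.lid k (A ⊗[k] B)).toLinearMap ∘ₗ
      TensorProduct.map (crossCounit (k := k) (A := A) (B := B))
        (LinearMap.id : A ⊗[k] B →ₗ[k] A ⊗[k] B) ∘ₗ crossComul φ = LinearMap.id) ∧
  ((TensorProduct.rid k (A ⊗[k] B)).toLinearMap ∘ₗ
      TensorProduct.map (LinearMap.id : A ⊗[k] B →ₗ[k] A ⊗[k] B)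
        (crossCounit (k := k) (A := A) (B := B)) ∘ₗ crossComul φ = LinearMap.id) ∧
  (crossComul φ ((1 : A) ⊗ₜ[k] (1 : B)) =
      ((1 : A) ⊗ₜ[k] (1 : B)) ⊗ₜ[k] ((1 : A) ⊗ₜ[k] (1 : B))) ∧
  (crossCounit (k := k) (A := A) (B := B) ((1 : A) ⊗ₜ[k] (1 : B)) = 1) ∧
  (crossComul φ ∘ₗ crossMul ψ =
      TensorProduct.map (crossMul ψ) (crossMul ψ) ∘ₗ
        (TensorProduct.tensorTensorTensorComm k (A ⊗[k] B) (A ⊗[k] B) (A ⊗[k] B)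
          (A ⊗[k] B)).toLinearMap ∘ₗ
        TensorProduct.map (crossComul φ) (crossComul φ)) ∧
  (crossCounit (k := k) (A := A) (B := B) ∘ₗ crossMul ψ =
      LinearMap.mul' k k ∘ₗ
        TensorProduct.map (crossCounit (k := k) (A := A) (B := B))
          (crossCounit (k := k) (A := A) (B := B)))

section CPAux
set_option synthInstance.maxHeartbeats 1000000
set_option maxHeartbeats 1000000
set_option linter.unusedSectionVars false

open Coalgebra LinearMap

/-- Projection `A ⊗ B → A`, `a ⊗ b ↦ ε(b) a`. -/
noncomputable def piA : A ⊗[k] B →ₗ[k] A :=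
  (TensorProduct.rid k A).toLinearMap ∘ₗ
    (Coalgebra.counit (R := k) (A := B)).lTensor A

/-- Projection `A ⊗ B → B`, `a ⊗ b ↦ ε(a) b`. -/
noncomputable def piB : A ⊗[k] B →ₗ[k] B :=
  (TensorProduct.lid k B).toLinearMap ∘ₗ
    (Coalgebra.counit (R := k) (A := A)).rTensor B

@[simp] lemma piA_tmul (a : A) (b : B) :
    (piA : A ⊗[k] B →ₗ[k] A) (a ⊗ₜ[k] b) = Coalgebra.counit (R := k) b • a := by
  simp [piA]

@[simp] lemma piB_tmul (a : A) (b : B) :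
    (piB : A ⊗[k] B →ₗ[k] B) (a ⊗ₜ[k] b) = Coalgebra.counit (R := k) a • b := by
  simp [piB]

/-- `B ⊗ A → A`, `u ⊗ v ↦ ε(u) v`. -/
noncomputable def sigmaBA : B ⊗[k] A →ₗ[k] A :=
  (TensorProduct.lid k A).toLinearMap ∘ₗ
    (Coalgebra.counit (R := k) (A := B)).rTensor A

/-- `B ⊗ A → B`, `u ⊗ v ↦ ε(v) u`. -/
noncomputable def tauBA : B ⊗[k] A →ₗ[k] B :=
  (TensorProduct.rid k B).toLinearMap ∘ₗ
    (Coalgebra.counit (R := k) (A := A)).lTensor B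

@[simp] lemma sigmaBA_tmul (u : B) (v : A) :
    (sigmaBA : B ⊗[k] A →ₗ[k] A) (u ⊗ₜ[k] v) = Coalgebra.counit (R := k) u • v := by
  simp [sigmaBA]

@[simp] lemma tauBA_tmul (u : B) (v : A) :
    (tauBA : B ⊗[k] A →ₗ[k] B) (u ⊗ₜ[k] v) = Coalgebra.counit (R := k) v • u := by
  simp [tauBA]

/-- `A ⊗ A → A`, `a₁ ⊗ a₂ ↦ ε(a₁) a₂`. -/
noncomputable def cA : A ⊗[k] A →ₗ[k] A :=
  (TensorProduct.lid k A).toLinearMap ∘ₗ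
    (Coalgebra.counit (R := k) (A := A)).rTensor A

/-- `B ⊗ B → B`, `b₁ ⊗ b₂ ↦ ε(b₂) b₁`. -/
noncomputable def cB : B ⊗[k] B →ₗ[k] B :=
  (TensorProduct.rid k B).toLinearMap ∘ₗ
    (Coalgebra.counit (R := k) (A := B)).lTensor B

@[simp] lemma cA_tmul (a₁ a₂ : A) :
    (cA : A ⊗[k] A →ₗ[k] A) (a₁ ⊗ₜ[k] a₂) = Coalgebra.counit (R := k) a₁ • a₂ := by
  simp [cA]

@[simp] lemma cB_tmul (b₁ b₂ : B) :
    (cB : B ⊗[k] B →ₗ[k] B) (b₁ ⊗ₜ[k] b₂) = Coalgebra.counit (R := k) b₂ • b₁ := by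
  simp [cB]

@[simp] lemma cA_comul (a : A) : (cA : A ⊗[k] A →ₗ[k] A) (Coalgebra.comul a) = a := by
  simp [cA, Coalgebra.rTensor_counit_comul]

@[simp] lemma cB_comul (b : B) : (cB : B ⊗[k] B →ₗ[k] B) (Coalgebra.comul b) = b := by
  simp [cB, Coalgebra.lTensor_counit_comul]

@[simp] lemma crossCounit_tmul (a : A) (b : B) :
    crossCounit (k := k) (A := A) (B := B) (a ⊗ₜ[k] b) =
      Coalgebra.counit a * Coalgebra.counit b := by
  simp [crossCounit, smul_eq_mul]

/-- The "inner" part of `crossComul`. -/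
noncomputable def Gmap (φ : A ⊗[k] B →ₗ[k] B ⊗[k] A) :
    (A ⊗[k] A) ⊗[k] (B ⊗[k] B) →ₗ[k] (A ⊗[k] B) ⊗[k] (A ⊗[k] B) :=
  (TensorProduct.assoc k (A ⊗[k] B) A B).toLinearMap ∘ₗ
    TensorProduct.map
      ((TensorProduct.assoc k A B A).symm.toLinearMap ∘ₗ
        TensorProduct.map (LinearMap.id : A →ₗ[k] A) φ ∘ₗ
        (TensorProduct.assoc k A A B).toLinearMap)
      (LinearMap.id : B →ₗ[k] B) ∘ₗ
    (TensorProduct.assoc k (A ⊗[k] A) B B).symm.toLinearMap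

/-- `B ⊗ A → (A ⊗ B) ⊗ (A ⊗ B)`, `u ⊗ v ↦ (a ⊗ u) ⊗ (v ⊗ b)`. -/
noncomputable def gammaG (a : A) (b : B) :
    B ⊗[k] A →ₗ[k] (A ⊗[k] B) ⊗[k] (A ⊗[k] B) :=
  TensorProduct.map (TensorProduct.mk k A B a) ((TensorProduct.mk k A B).flip b)

@[simp] lemma gammaG_tmul (a : A) (b : B) (u : B) (v : A) :
    gammaG a b (u ⊗ₜ[k] v) = (a ⊗ₜ[k] u) ⊗ₜ[k] (v ⊗ₜ[k] b) := by
  simp [gammaG]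

lemma crossComul_tmul (φ : A ⊗[k] B →ₗ[k] B ⊗[k] A) (a : A) (b : B) :
    crossComul φ (a ⊗ₜ[k] b) =
      Gmap φ ((Coalgebra.comul a) ⊗ₜ[k] (Coalgebra.comul b)) := by
  simp [crossComul, Gmap]

lemma Gmap_tmul (φ : A ⊗[k] B →ₗ[k] B ⊗[k] A) (a₁ a₂ : A) (b₁ b₂ : B) :
    Gmap φ ((a₁ ⊗ₜ[k] a₂) ⊗ₜ[k] (b₁ ⊗ₜ[k] b₂)) = gammaG a₁ b₂ (φ (a₂ ⊗ₜ[k] b₁)) := by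
  simp only [Gmap, LinearMap.comp_apply, LinearEquiv.coe_coe, TensorProduct.assoc_symm_tmul,
    TensorProduct.map_tmul, TensorProduct.assoc_tmul, LinearMap.id_coe, id_eq]
  induction φ (a₂ ⊗ₜ[k] b₁) using TensorProduct.induction_on with
  | zero => simp [TensorProduct.tmul_zero, TensorProduct.zero_tmul]
  | tmul u v => simp
  | add x y hx hy => simp [TensorProduct.tmul_add, TensorProduct.add_tmul, hx, hy]

lemma crossMul_tmul (ψ : B ⊗[k] A →ₗ[k] A ⊗[k] B) (a c : A) (b d : B) :
    crossMul ψ ((a ⊗ₜ[k] b) ⊗ₜ[k] (c ⊗ₜ[k] d)) =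
      TensorProduct.map (LinearMap.mulLeft k a) (LinearMap.mulRight k d) (ψ (b ⊗ₜ[k] c)) := by
  simp only [crossMul, LinearMap.comp_apply, LinearEquiv.coe_coe, TensorProduct.assoc_symm_tmul,
    TensorProduct.map_tmul, TensorProduct.assoc_tmul, LinearMap.id_coe, id_eq]
  induction ψ (b ⊗ₜ[k] c) using TensorProduct.induction_on with
  | zero => simp [TensorProduct.tmul_zero, TensorProduct.zero_tmul]
  | tmul u v => simp [LinearMap.mul'_apply]
  | add x y hx hy => simp [TensorProduct.tmul_add, TensorProduct.add_tmul, hx, hy]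

lemma mapBA_gamma (a : A) (b : B) (t : B ⊗[k] A) :
    TensorProduct.map (piB : A ⊗[k] B →ₗ[k] B) (piA : A ⊗[k] B →ₗ[k] A) (gammaG a b t) =
      (Coalgebra.counit (R := k) a * Coalgebra.counit (R := k) b) • t := by
  induction t using TensorProduct.induction_on with
  | zero => simp
  | tmul u v => simp [TensorProduct.smul_tmul', TensorProduct.tmul_smul, smul_smul, mul_comm]
  | add x y hx hy => simp [hx, hy]

lemma mapAA_gamma (a : A) (b : B) (t : B ⊗[k] A) :
    TensorProduct.map (piA : A ⊗[k] B →ₗ[k] A) (piA : A ⊗[k] B →ₗ[k] A) (gammaG a b t) =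
      Coalgebra.counit (R := k) b • (a ⊗ₜ[k] sigmaBA t) := by
  induction t using TensorProduct.induction_on with
  | zero => simp
  | tmul u v =>
    simp [TensorProduct.smul_tmul', TensorProduct.tmul_smul, smul_smul, mul_comm]
  | add x y hx hy => simp [hx, hy, TensorProduct.tmul_add]

lemma mapBB_gamma (a : A) (b : B) (t : B ⊗[k] A) :
    TensorProduct.map (piB : A ⊗[k] B →ₗ[k] B) (piB : A ⊗[k] B →ₗ[k] B) (gammaG a b t) =
      Coalgebra.counit (R := k) a • (tauBA t ⊗ₜ[k] b) := by
  induction t using TensorProduct.induction_on with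
  | zero => simp
  | tmul u v =>
    simp [TensorProduct.smul_tmul', TensorProduct.tmul_smul, smul_smul, mul_comm]
  | add x y hx hy => simp [hx, hy, TensorProduct.add_tmul]

lemma cntA_gamma (a : A) (b : B) (t : B ⊗[k] A) :
    (piA : A ⊗[k] B →ₗ[k] A)
        ((TensorProduct.lid k (A ⊗[k] B))
          (TensorProduct.map (crossCounit (k := k) (A := A) (B := B))
            (LinearMap.id : A ⊗[k] B →ₗ[k] A ⊗[k] B) (gammaG a b t))) =
      (Coalgebra.counit (R := k) a * Coalgebra.counit (R := k) b) • sigmaBA t := by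
  induction t using TensorProduct.induction_on with
  | zero => simp
  | tmul u v =>
    simp only [gammaG_tmul, TensorProduct.map_tmul, LinearMap.id_coe, id_eq,
      crossCounit_tmul, TensorProduct.lid_tmul, map_smul, piA_tmul, sigmaBA_tmul,
      smul_smul]
    congr 1
    ring
  | add x y hx hy => simp [hx, hy]

lemma cntB_gamma (a : A) (b : B) (t : B ⊗[k] A) :
    (piB : A ⊗[k] B →ₗ[k] B)
        ((TensorProduct.rid k (A ⊗[k] B))
          (TensorProduct.map (LinearMap.id : A ⊗[k] B →ₗ[k] A ⊗[k] B)
            (crossCounit (k := k) (A := A) (B := B)) (gammaG a b t))) =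
      (Coalgebra.counit (R := k) a * Coalgebra.counit (R := k) b) • tauBA t := by
  induction t using TensorProduct.induction_on with
  | zero => simp
  | tmul u v =>
    simp only [gammaG_tmul, TensorProduct.map_tmul, LinearMap.id_coe, id_eq,
      crossCounit_tmul, TensorProduct.rid_tmul, map_smul, piB_tmul, tauBA_tmul,
      smul_smul]
    congr 1
    ring
  | add x y hx hy => simp [hx, hy]

lemma K_BA (φ : A ⊗[k] B →ₗ[k] B ⊗[k] A) (x : A ⊗[k] A) (y : B ⊗[k] B) :
    TensorProduct.map (piB : A ⊗[k] B →ₗ[k] B) (piA : A ⊗[k] B →ₗ[k] A)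
        (Gmap φ (x ⊗ₜ[k] y)) = φ (cA x ⊗ₜ[k] cB y) := by
  induction x using TensorProduct.induction_on with
  | zero => simp [TensorProduct.zero_tmul]
  | add x₁ x₂ h1 h2 =>
    simp only [TensorProduct.add_tmul, map_add, h1, h2, TensorProduct.tmul_add]
  | tmul a₁ a₂ =>
    induction y using TensorProduct.induction_on with
    | zero => simp [TensorProduct.tmul_zero]
    | add y₁ y₂ h1 h2 =>
      simp only [TensorProduct.tmul_add, map_add, h1, h2]
    | tmul b₁ b₂ =>
      rw [Gmap_tmul, mapBA_gamma, cA_tmul, cB_tmul, TensorProduct.tmul_smul,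
        ← TensorProduct.smul_tmul']
      simp only [LinearMap.map_smul, smul_smul]
      rw [mul_comm]

lemma K_D (φ : A ⊗[k] B →ₗ[k] B ⊗[k] A) (x : A ⊗[k] A) (y : B ⊗[k] B) :
    (piA : A ⊗[k] B →ₗ[k] A)
        ((TensorProduct.lid k (A ⊗[k] B))
          (TensorProduct.map (crossCounit (k := k) (A := A) (B := B))
            (LinearMap.id : A ⊗[k] B →ₗ[k] A ⊗[k] B) (Gmap φ (x ⊗ₜ[k] y)))) =
      sigmaBA (φ (cA x ⊗ₜ[k] cB y)) := by
  induction x using TensorProduct.induction_on with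
  | zero => simp [TensorProduct.zero_tmul]
  | add x₁ x₂ h1 h2 =>
    simp only [TensorProduct.add_tmul, map_add, h1, h2, TensorProduct.tmul_add]
  | tmul a₁ a₂ =>
    induction y using TensorProduct.induction_on with
    | zero => simp [TensorProduct.tmul_zero]
    | add y₁ y₂ h1 h2 =>
      simp only [TensorProduct.tmul_add, map_add, h1, h2]
    | tmul b₁ b₂ =>
      rw [Gmap_tmul, cntA_gamma, cA_tmul, cB_tmul, TensorProduct.tmul_smul,
        ← TensorProduct.smul_tmul']
      simp only [LinearMap.map_smul, smul_smul]
      rw [mul_comm]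

lemma K_C (φ : A ⊗[k] B →ₗ[k] B ⊗[k] A) (x : A ⊗[k] A) (y : B ⊗[k] B) :
    (piB : A ⊗[k] B →ₗ[k] B)
        ((TensorProduct.rid k (A ⊗[k] B))
          (TensorProduct.map (LinearMap.id : A ⊗[k] B →ₗ[k] A ⊗[k] B)
            (crossCounit (k := k) (A := A) (B := B)) (Gmap φ (x ⊗ₜ[k] y)))) =
      tauBA (φ (cA x ⊗ₜ[k] cB y)) := by
  induction x using TensorProduct.induction_on with
  | zero => simp [TensorProduct.zero_tmul]
  | add x₁ x₂ h1 h2 =>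
    simp only [TensorProduct.add_tmul, map_add, h1, h2, TensorProduct.tmul_add]
  | tmul a₁ a₂ =>
    induction y using TensorProduct.induction_on with
    | zero => simp [TensorProduct.tmul_zero]
    | add y₁ y₂ h1 h2 =>
      simp only [TensorProduct.tmul_add, map_add, h1, h2]
    | tmul b₁ b₂ =>
      rw [Gmap_tmul, cntB_gamma, cA_tmul, cB_tmul, TensorProduct.tmul_smul,
        ← TensorProduct.smul_tmul']
      simp only [LinearMap.map_smul, smul_smul]
      rw [mul_comm]

lemma K_AA (φ : A ⊗[k] B →ₗ[k] B ⊗[k] A)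
    (hD : ∀ (a : A) (b : B), sigmaBA (φ (a ⊗ₜ[k] b)) = Coalgebra.counit (R := k) b • a)
    (x : A ⊗[k] A) (y : B ⊗[k] B) :
    TensorProduct.map (piA : A ⊗[k] B →ₗ[k] A) (piA : A ⊗[k] B →ₗ[k] A)
        (Gmap φ (x ⊗ₜ[k] y)) =
      Coalgebra.counit (R := k) (cB y) • x := by
  induction x using TensorProduct.induction_on with
  | zero => simp [TensorProduct.zero_tmul]
  | add x₁ x₂ h1 h2 =>
    simp only [TensorProduct.add_tmul, map_add, h1, h2, smul_add]
  | tmul a₁ a₂ =>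
    induction y using TensorProduct.induction_on with
    | zero => simp [TensorProduct.tmul_zero]
    | add y₁ y₂ h1 h2 =>
      simp only [TensorProduct.tmul_add, map_add, h1, h2, add_smul]
    | tmul b₁ b₂ =>
      rw [Gmap_tmul, mapAA_gamma, hD]
      simp [TensorProduct.tmul_smul, smul_smul, mul_comm]

lemma K_BB (φ : A ⊗[k] B →ₗ[k] B ⊗[k] A)
    (hC : ∀ (a : A) (b : B), tauBA (φ (a ⊗ₜ[k] b)) = Coalgebra.counit (R := k) a • b)
    (x : A ⊗[k] A) (y : B ⊗[k] B) :
    TensorProduct.map (piB : A ⊗[k] B →ₗ[k] B) (piB : A ⊗[k] B →ₗ[k] B)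
        (Gmap φ (x ⊗ₜ[k] y)) =
      Coalgebra.counit (R := k) (cA x) • y := by
  induction x using TensorProduct.induction_on with
  | zero => simp [TensorProduct.zero_tmul]
  | add x₁ x₂ h1 h2 =>
    simp only [TensorProduct.add_tmul, map_add, h1, h2, add_smul]
  | tmul a₁ a₂ =>
    induction y using TensorProduct.induction_on with
    | zero => simp [TensorProduct.tmul_zero]
    | add y₁ y₂ h1 h2 =>
      simp only [TensorProduct.tmul_add, map_add, h1, h2, smul_add]
    | tmul b₁ b₂ =>
      rw [Gmap_tmul, mapBB_gamma, hC]
      simp [TensorProduct.smul_tmul', smul_smul, mul_comm]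

lemma psi_one_one (ψ : B ⊗[k] A →ₗ[k] A ⊗[k] B)
    (h : ∀ x : A ⊗[k] B, crossMul ψ (((1 : A) ⊗ₜ[k] (1 : B)) ⊗ₜ[k] x) = x) :
    ψ ((1 : B) ⊗ₜ[k] (1 : A)) = (1 : A) ⊗ₜ[k] (1 : B) := by
  have h1 := h ((1 : A) ⊗ₜ[k] (1 : B))
  rw [crossMul_tmul] at h1
  simpa [LinearMap.mulLeft_one, LinearMap.mulRight_one] using h1

lemma mul_split (ψ : B ⊗[k] A →ₗ[k] A ⊗[k] B)
    (h1 : ψ ((1 : B) ⊗ₜ[k] (1 : A)) = (1 : A) ⊗ₜ[k] (1 : B)) (a : A) (b : B) :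
    crossMul ψ ((a ⊗ₜ[k] (1 : B)) ⊗ₜ[k] ((1 : A) ⊗ₜ[k] b)) = a ⊗ₜ[k] b := by
  rw [crossMul_tmul, h1]
  simp

lemma phiD (φ : A ⊗[k] B →ₗ[k] B ⊗[k] A)
    (h5 : (TensorProduct.lid k (A ⊗[k] B)).toLinearMap ∘ₗ
      TensorProduct.map (crossCounit (k := k) (A := A) (B := B))
        (LinearMap.id : A ⊗[k] B →ₗ[k] A ⊗[k] B) ∘ₗ crossComul φ = LinearMap.id)
    (a : A) (b : B) :
    sigmaBA (φ (a ⊗ₜ[k] b)) = Coalgebra.counit (R := k) b • a := by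
  have h := congrArg (piA : A ⊗[k] B →ₗ[k] A) (LinearMap.congr_fun h5 (a ⊗ₜ[k] b))
  simp only [LinearMap.comp_apply, LinearEquiv.coe_coe, LinearMap.id_coe, id_eq] at h
  rw [crossComul_tmul, K_D] at h
  simpa using h

lemma phiC (φ : A ⊗[k] B →ₗ[k] B ⊗[k] A)
    (h6 : (TensorProduct.rid k (A ⊗[k] B)).toLinearMap ∘ₗ
      TensorProduct.map (LinearMap.id : A ⊗[k] B →ₗ[k] A ⊗[k] B)
        (crossCounit (k := k) (A := A) (B := B)) ∘ₗ crossComul φ = LinearMap.id)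
    (a : A) (b : B) :
    tauBA (φ (a ⊗ₜ[k] b)) = Coalgebra.counit (R := k) a • b := by
  have h := congrArg (piB : A ⊗[k] B →ₗ[k] B) (LinearMap.congr_fun h6 (a ⊗ₜ[k] b))
  simp only [LinearMap.comp_apply, LinearEquiv.coe_coe, LinearMap.id_coe, id_eq] at h
  rw [crossComul_tmul, K_C] at h
  simpa using h

lemma comul_one_A (φ : A ⊗[k] B →ₗ[k] B ⊗[k] A)
    (hD : ∀ (a : A) (b : B), sigmaBA (φ (a ⊗ₜ[k] b)) = Coalgebra.counit (R := k) b • a)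
    (h7 : crossComul φ ((1 : A) ⊗ₜ[k] (1 : B)) =
      ((1 : A) ⊗ₜ[k] (1 : B)) ⊗ₜ[k] ((1 : A) ⊗ₜ[k] (1 : B)))
    (hab : Coalgebra.counit (R := k) (1 : A) * Coalgebra.counit (R := k) (1 : B) = 1) :
    Coalgebra.comul (R := k) (1 : A) =
      Coalgebra.counit (R := k) (1 : B) • ((1 : A) ⊗ₜ[k] (1 : A)) := by
  have h := congrArg
    (TensorProduct.map (piA : A ⊗[k] B →ₗ[k] A) (piA : A ⊗[k] B →ₗ[k] A)) h7
  rw [crossComul_tmul, K_AA φ hD, cB_comul] at h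
  simp only [TensorProduct.map_tmul, piA_tmul, TensorProduct.smul_tmul',
    TensorProduct.tmul_smul, smul_smul] at h
  calc Coalgebra.comul (R := k) (1 : A)
      = (Coalgebra.counit (R := k) (1 : A) * Coalgebra.counit (R := k) (1 : B)) •
          Coalgebra.comul (R := k) (1 : A) := by rw [hab, one_smul]
    _ = Coalgebra.counit (R := k) (1 : A) • (Coalgebra.counit (R := k) (1 : B) •
          Coalgebra.comul (R := k) (1 : A)) := by rw [smul_smul]
    _ = Coalgebra.counit (R := k) (1 : A) •
          ((Coalgebra.counit (R := k) (1 : B) * Coalgebra.counit (R := k) (1 : B)) •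
            ((1 : A) ⊗ₜ[k] (1 : A))) := by
            rw [h]; simp [TensorProduct.smul_tmul', smul_smul]
    _ = ((Coalgebra.counit (R := k) (1 : A) * Coalgebra.counit (R := k) (1 : B)) *
          Coalgebra.counit (R := k) (1 : B)) • ((1 : A) ⊗ₜ[k] (1 : A)) := by
            rw [smul_smul, mul_assoc]
    _ = Coalgebra.counit (R := k) (1 : B) • ((1 : A) ⊗ₜ[k] (1 : A)) := by
            rw [hab, one_mul]

lemma comul_one_B (φ : A ⊗[k] B →ₗ[k] B ⊗[k] A)
    (hC : ∀ (a : A) (b : B), tauBA (φ (a ⊗ₜ[k] b)) = Coalgebra.counit (R := k) a • b)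
    (h7 : crossComul φ ((1 : A) ⊗ₜ[k] (1 : B)) =
      ((1 : A) ⊗ₜ[k] (1 : B)) ⊗ₜ[k] ((1 : A) ⊗ₜ[k] (1 : B)))
    (hab : Coalgebra.counit (R := k) (1 : A) * Coalgebra.counit (R := k) (1 : B) = 1) :
    Coalgebra.comul (R := k) (1 : B) =
      Coalgebra.counit (R := k) (1 : A) • ((1 : B) ⊗ₜ[k] (1 : B)) := by
  have h := congrArg
    (TensorProduct.map (piB : A ⊗[k] B →ₗ[k] B) (piB : A ⊗[k] B →ₗ[k] B)) h7
  rw [crossComul_tmul, K_BB φ hC, cA_comul] at h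
  simp only [TensorProduct.map_tmul, piB_tmul, TensorProduct.smul_tmul',
    TensorProduct.tmul_smul, smul_smul] at h
  calc Coalgebra.comul (R := k) (1 : B)
      = (Coalgebra.counit (R := k) (1 : A) * Coalgebra.counit (R := k) (1 : B)) •
          Coalgebra.comul (R := k) (1 : B) := by rw [hab, one_smul]
    _ = Coalgebra.counit (R := k) (1 : B) • (Coalgebra.counit (R := k) (1 : A) •
          Coalgebra.comul (R := k) (1 : B)) := by rw [smul_smul, mul_comm]
    _ = Coalgebra.counit (R := k) (1 : B) •
          ((Coalgebra.counit (R := k) (1 : A) * Coalgebra.counit (R := k) (1 : A)) •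
            ((1 : B) ⊗ₜ[k] (1 : B))) := by
            rw [h]; simp [TensorProduct.smul_tmul', smul_smul]
    _ = ((Coalgebra.counit (R := k) (1 : A) * Coalgebra.counit (R := k) (1 : B)) *
          Coalgebra.counit (R := k) (1 : A)) • ((1 : B) ⊗ₜ[k] (1 : B)) := by
            rw [smul_smul]; ring_nf
    _ = Coalgebra.counit (R := k) (1 : A) • ((1 : B) ⊗ₜ[k] (1 : B)) := by
            rw [hab, one_mul]

lemma K_norm1 (φ : A ⊗[k] B →ₗ[k] B ⊗[k] A)
    (hn2 : ∀ a : A, φ (a ⊗ₜ[k] (1 : B)) = (1 : B) ⊗ₜ[k] a) (x : A ⊗[k] A) :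
    Gmap φ (x ⊗ₜ[k] ((1 : B) ⊗ₜ[k] (1 : B))) =
      TensorProduct.map ((TensorProduct.mk k A B).flip (1 : B))
        ((TensorProduct.mk k A B).flip (1 : B)) x := by
  induction x using TensorProduct.induction_on with
  | zero => simp [TensorProduct.zero_tmul]
  | tmul a₁ a₂ => rw [Gmap_tmul, hn2]; simp
  | add x₁ x₂ h1 h2 => simp only [TensorProduct.add_tmul, map_add, h1, h2]

lemma K_norm2 (φ : A ⊗[k] B →ₗ[k] B ⊗[k] A)
    (hn1 : ∀ b : B, φ ((1 : A) ⊗ₜ[k] b) = b ⊗ₜ[k] (1 : A)) (y : B ⊗[k] B) :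
    Gmap φ (((1 : A) ⊗ₜ[k] (1 : A)) ⊗ₜ[k] y) =
      TensorProduct.map (TensorProduct.mk k A B (1 : A))
        (TensorProduct.mk k A B (1 : A)) y := by
  induction y using TensorProduct.induction_on with
  | zero => simp [TensorProduct.tmul_zero]
  | tmul b₁ b₂ => rw [Gmap_tmul, hn1]; simp
  | add y₁ y₂ h1 h2 => simp only [TensorProduct.tmul_add, map_add, h1, h2]

lemma K_main (ψ : B ⊗[k] A →ₗ[k] A ⊗[k] B)
    (h1 : ψ ((1 : B) ⊗ₜ[k] (1 : A)) = (1 : A) ⊗ₜ[k] (1 : B))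
    (x : A ⊗[k] A) (y : B ⊗[k] B) :
    TensorProduct.map (piB : A ⊗[k] B →ₗ[k] B) (piA : A ⊗[k] B →ₗ[k] A)
      (TensorProduct.map (crossMul ψ) (crossMul ψ)
        ((TensorProduct.tensorTensorTensorComm k (A ⊗[k] B) (A ⊗[k] B) (A ⊗[k] B)
            (A ⊗[k] B))
          ((TensorProduct.map ((TensorProduct.mk k A B).flip (1 : B))
              ((TensorProduct.mk k A B).flip (1 : B)) x) ⊗ₜ[k]
            (TensorProduct.map (TensorProduct.mk k A B (1 : A))
              (TensorProduct.mk k A B (1 : A)) y)))) =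
      cB y ⊗ₜ[k] cA x := by
  induction x using TensorProduct.induction_on with
  | zero => simp [TensorProduct.zero_tmul]
  | add x₁ x₂ hx1 hx2 =>
    simp only [TensorProduct.add_tmul, map_add, hx1, hx2, TensorProduct.tmul_add]
  | tmul a₁ a₂ =>
    induction y using TensorProduct.induction_on with
    | zero => simp [TensorProduct.tmul_zero]
    | add y₁ y₂ hy1 hy2 =>
      simp only [TensorProduct.tmul_add, map_add, hy1, hy2, TensorProduct.add_tmul]
    | tmul b₁ b₂ =>
      simp only [TensorProduct.map_tmul, LinearMap.flip_apply, TensorProduct.mk_apply,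
        TensorProduct.tensorTensorTensorComm_tmul, mul_split ψ h1]
      simp [TensorProduct.smul_tmul', TensorProduct.tmul_smul, smul_smul, mul_comm]

lemma lemA (φ : A ⊗[k] B →ₗ[k] B ⊗[k] A) (a : A) (b : B) :
    TensorProduct.map (piB : A ⊗[k] B →ₗ[k] B) (piA : A ⊗[k] B →ₗ[k] A)
      (crossComul φ (a ⊗ₜ[k] b)) = φ (a ⊗ₜ[k] b) := by
  rw [crossComul_tmul, K_BA, cA_comul, cB_comul]

lemma K_flip (x : A ⊗[k] A) (y : B ⊗[k] B) :
    Gmap (TensorProduct.comm k A B).toLinearMap (x ⊗ₜ[k] y) =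
      (TensorProduct.tensorTensorTensorComm k A A B B) (x ⊗ₜ[k] y) := by
  induction x using TensorProduct.induction_on with
  | zero => simp [TensorProduct.zero_tmul]
  | add x₁ x₂ hx1 hx2 =>
    simp only [TensorProduct.add_tmul, map_add, hx1, hx2]
  | tmul a₁ a₂ =>
    induction y using TensorProduct.induction_on with
    | zero => simp [TensorProduct.tmul_zero]
    | add y₁ y₂ hy1 hy2 =>
      simp only [TensorProduct.tmul_add, map_add, hy1, hy2]
    | tmul b₁ b₂ =>
      rw [Gmap_tmul]
      simp [TensorProduct.tensorTensorTensorComm_tmul]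

end CPAux

set_option synthInstance.maxHeartbeats 1000000
set_option maxHeartbeats 1000000

/-- in a cross product bialgebra, `φ` is left and right normal if and only
if `φ` is the flip map; in that case `A #^φ B` is the tensor product coalgebra. -/
theorem phi_normal_iff_flip (ψ : B ⊗[k] A →ₗ[k] A ⊗[k] B)
    (φ : A ⊗[k] B →ₗ[k] B ⊗[k] A) (H : IsCrossBialgebra ψ φ) :
    (((∀ b : B, φ ((1 : A) ⊗ₜ[k] b) = b ⊗ₜ[k] (1 : A)) ∧
        (∀ a : A, φ (a ⊗ₜ[k] (1 : B)) = (1 : B) ⊗ₜ[k] a)) ↔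
      φ = (TensorProduct.comm k A B).toLinearMap) ∧
    (φ = (TensorProduct.comm k A B).toLinearMap →
      crossComul φ =
        (TensorProduct.tensorTensorTensorComm k A A B B).toLinearMap ∘ₗ
          TensorProduct.map (Coalgebra.comul (R := k) (A := A))
            (Coalgebra.comul (R := k) (A := B))) := by
  obtain ⟨-, hone, -, -, h5, h6, h7, h8, hmul, -⟩ := H
  have hψ1 : ψ ((1 : B) ⊗ₜ[k] (1 : A)) = (1 : A) ⊗ₜ[k] (1 : B) := psi_one_one ψ hone
  have hD := phiD φ h5
  have hC := phiC φ h6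
  have hab : Coalgebra.counit (R := k) (1 : A) * Coalgebra.counit (R := k) (1 : B) = 1 := by
    simpa using h8
  refine ⟨⟨fun hn => ?_, fun hf => ?_⟩, fun hf => ?_⟩
  · obtain ⟨hn1, hn2⟩ := hn
    have hΔA := comul_one_A φ hD h7 hab
    have hΔB := comul_one_B φ hC h7 hab
    apply TensorProduct.ext'
    intro a b
    have key := LinearMap.congr_fun hmul ((a ⊗ₜ[k] (1 : B)) ⊗ₜ[k] ((1 : A) ⊗ₜ[k] b))
    simp only [LinearMap.comp_apply, LinearEquiv.coe_coe, TensorProduct.map_tmul] at key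
    rw [mul_split ψ hψ1] at key
    have e1 : crossComul φ (a ⊗ₜ[k] (1 : B)) = Coalgebra.counit (R := k) (1 : A) •
        TensorProduct.map ((TensorProduct.mk k A B).flip (1 : B))
          ((TensorProduct.mk k A B).flip (1 : B)) (Coalgebra.comul a) := by
      rw [crossComul_tmul, hΔB, TensorProduct.tmul_smul, LinearMap.map_smul, K_norm1 φ hn2]
    have e2 : crossComul φ ((1 : A) ⊗ₜ[k] b) = Coalgebra.counit (R := k) (1 : B) •
        TensorProduct.map (TensorProduct.mk k A B (1 : A))
          (TensorProduct.mk k A B (1 : A)) (Coalgebra.comul b) := by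
      rw [crossComul_tmul, hΔA, ← TensorProduct.smul_tmul', LinearMap.map_smul, K_norm2 φ hn1]
    rw [e1, e2, ← TensorProduct.smul_tmul', TensorProduct.tmul_smul] at key
    simp only [map_smul] at key
    have h2 := congrArg
      (TensorProduct.map (piB : A ⊗[k] B →ₗ[k] B) (piA : A ⊗[k] B →ₗ[k] A)) key
    rw [lemA] at h2
    simp only [map_smul] at h2
    rw [K_main ψ hψ1, cA_comul, cB_comul, smul_smul, hab, one_smul] at h2
    simpa using h2
  · subst hf
    exact ⟨fun b => by simp, fun a => by simp⟩
  · subst hf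
    apply TensorProduct.ext'
    intro a b
    rw [crossComul_tmul]
    simp only [LinearMap.comp_apply, LinearEquiv.coe_coe, TensorProduct.map_tmul]
    exact K_flip (Coalgebra.comul a) (Coalgebra.comul b)
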